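/- Let ι be a countable index type, d : ι → ℕ, and for each i let M i be a Hermitian d i × d i complex matrix, with uniformly bounded operator norms: ‖M i‖ ≤ C for all i and some C ≥ 0. Let T be the block-diagonal bounded operator on the Hilbert direct sum H := ℓ²(ι; (ℂ^{d i})_{i∈ι}) given by (T x) i = (M i)(x i). Then the spectrum of T equals the closure of the union of the spectra of the blocks: spectrum(T) = closure( ⋃ᵢ spectrum(M i) ). -/

import Mathlib

set_option maxHeartbeats 1000000
open scoped ENNReal
open Matrix
open scoped ENNReal

private lemma memℓp_blockwise {ι : Type*} {E : ι → Type*} [∀ i, NormedAddCommGroup (E i)]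
    [∀ i, NormedSpace ℂ (E i)] (A : ∀ i, E i →L[ℂ] E i) (K : ℝ) (hK : 0 ≤ K)
    (h : ∀ i, ‖A i‖ ≤ K) (x : lp E 2) :
    Memℓp (fun i => A i (x i)) 2 := by
  apply memℓp_gen
  have hx : Summable fun i => ‖x i‖ ^ (2 : ℝ≥0∞).toReal :=
    (lp.memℓp x).summable (by norm_num)
  refine Summable.of_nonneg_of_le (fun i => Real.rpow_nonneg (norm_nonneg _) _)
    (fun i => ?_) (hx.mul_left (K ^ (2 : ℝ≥0∞).toReal))
  calc ‖A i (x i)‖ ^ (2 : ℝ≥0∞).toReal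
      ≤ (K * ‖x i‖) ^ (2 : ℝ≥0∞).toReal := by
        apply Real.rpow_le_rpow (norm_nonneg _) _ (by norm_num)
        exact ((A i).le_opNorm (x i)).trans
          (mul_le_mul_of_nonneg_right (h i) (norm_nonneg _))
    _ = K ^ (2 : ℝ≥0∞).toReal * ‖x i‖ ^ (2 : ℝ≥0∞).toReal :=
        Real.mul_rpow hK (norm_nonneg _)

private lemma exists_blockCLM {ι : Type*} {E : ι → Type*} [∀ i, NormedAddCommGroup (E i)]
    [∀ i, NormedSpace ℂ (E i)] (A : ∀ i, E i →L[ℂ] E i) (K : ℝ) (hK : 0 ≤ K)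
    (h : ∀ i, ‖A i‖ ≤ K) :
    ∃ S : lp E 2 →L[ℂ] lp E 2, ∀ (x : lp E 2) (i : ι), (S x : ∀ i, E i) i = A i (x i) := by
  refine ⟨LinearMap.mkContinuous
    { toFun := fun x => ⟨fun i => A i (x i), memℓp_blockwise A K hK h x⟩
      map_add' := fun x y => lp.ext (funext fun i => by
        show A i ((x + y : lp E 2) i) = A i (x i) + A i (y i)
        rw [lp.coeFn_add, Pi.add_apply, map_add])
      map_smul' := fun c x => lp.ext (funext fun i => by
        show A i ((c • x : lp E 2) i) = c • A i (x i)
        rw [lp.coeFn_smul, Pi.smul_apply, _root_.map_smul]) }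
    K (fun x => ?_), fun x i => rfl⟩
  apply lp.norm_le_of_forall_sum_le (by norm_num) (mul_nonneg hK (norm_nonneg x))
  intro s
  calc (∑ i ∈ s, ‖A i (x i)‖ ^ (2 : ℝ≥0∞).toReal)
      ≤ ∑ i ∈ s, K ^ (2 : ℝ≥0∞).toReal * ‖x i‖ ^ (2 : ℝ≥0∞).toReal := by
        refine Finset.sum_le_sum fun i _ => ?_
        rw [← Real.mul_rpow hK (norm_nonneg _)]
        apply Real.rpow_le_rpow (norm_nonneg _) _ (by norm_num)
        exact ((A i).le_opNorm (x i)).trans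
          (mul_le_mul_of_nonneg_right (h i) (norm_nonneg _))
    _ = K ^ (2 : ℝ≥0∞).toReal * ∑ i ∈ s, ‖x i‖ ^ (2 : ℝ≥0∞).toReal := by
        rw [Finset.mul_sum]
    _ ≤ K ^ (2 : ℝ≥0∞).toReal * ‖x‖ ^ (2 : ℝ≥0∞).toReal := by
        gcongr
        · exact lp.sum_rpow_le_norm_rpow (by norm_num) x s
    _ = (K * ‖x‖) ^ (2 : ℝ≥0∞).toReal := (Real.mul_rpow hK (norm_nonneg _)).symm
open Matrix

private lemma herm_est {n : ℕ} (N : Matrix (Fin n) (Fin n) ℂ) (hN : N.IsHermitian)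
    (z : ℂ) (ε : ℝ) (hε : 0 ≤ ε) (hd : ∀ μ ∈ spectrum ℂ N, ε ≤ ‖z - μ‖)
    (w : EuclideanSpace ℂ (Fin n)) :
    ε * ‖w‖ ≤ ‖z • w - Matrix.toEuclideanCLM (𝕜 := ℂ) N w‖ := by
  classical
  set b := hN.eigenvectorBasis with hb
  set y := z • w - Matrix.toEuclideanCLM (𝕜 := ℂ) N w with hy
  have hsym : (Matrix.toEuclideanLin N).IsSymmetric :=
    Matrix.isHermitian_iff_isSymmetric.1 hN
  have hlin : ∀ v, Matrix.toEuclideanCLM (𝕜 := ℂ) N v = Matrix.toEuclideanLin N v := by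
    intro v
    rw [← Matrix.coe_toEuclideanCLM_eq_toEuclideanLin]
    rfl
  have hAb : ∀ j, Matrix.toEuclideanLin N (b j) = (hN.eigenvalues j : ℂ) • b j := by
    intro j
    have h1 := hN.mulVec_eigenvectorBasis j
    apply (WithLp.equiv 2 (Fin n → ℂ)).injective
    ext k
    have : (WithLp.equiv 2 (Fin n → ℂ)) (Matrix.toEuclideanLin N (b j)) = N *ᵥ ⇑(b j) := by
      rw [← hlin]
      exact Matrix.ofLp_toEuclideanCLM (𝕜 := ℂ) N (b j)
    rw [this, h1]
    simp [Pi.smul_apply, Complex.real_smul, hb]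
  have key : ∀ j, b.repr y j = (z - (hN.eigenvalues j : ℂ)) * b.repr w j := by
    intro j
    rw [hy, map_sub, _root_.map_smul]
    simp only [PiLp.sub_apply, PiLp.smul_apply, smul_eq_mul]
    have h2 : b.repr (Matrix.toEuclideanCLM (𝕜 := ℂ) N w) j
        = (hN.eigenvalues j : ℂ) * b.repr w j := by
      rw [b.repr_apply_apply, b.repr_apply_apply, hlin, ← hsym (b j) w, hAb,
        inner_smul_left]
      simp
    rw [h2]
    ring
  -- specturm membership of eigenvalues
  have hmem : ∀ j, (hN.eigenvalues j : ℂ) ∈ spectrum ℂ N := by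
    intro j
    have := hN.eigenvalues_mem_spectrum_real j
    simpa using spectrum.algebraMap_mem ℂ this
  -- norms
  have hny : ‖y‖ = Real.sqrt (∑ j, ‖b.repr y j‖ ^ 2) := by
    rw [← b.repr.norm_map y, EuclideanSpace.norm_eq]
  have hnw : ‖w‖ = Real.sqrt (∑ j, ‖b.repr w j‖ ^ 2) := by
    rw [← b.repr.norm_map w, EuclideanSpace.norm_eq]
  rw [hny, hnw, ← Real.sqrt_sq hε, ← Real.sqrt_mul (sq_nonneg ε)]
  apply Real.sqrt_le_sqrt
  rw [Finset.mul_sum]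
  refine Finset.sum_le_sum fun j _ => ?_
  rw [key j, norm_mul, mul_pow]
  have hj := hd _ (hmem j)
  have h2 : ε ^ 2 ≤ ‖z - (hN.eigenvalues j : ℂ)‖ ^ 2 := by
    apply pow_le_pow_left₀ hε hj
  exact mul_le_mul_of_nonneg_right h2 (by positivity)

/-- The spectrum of a block-diagonal bounded operator on the Hilbert direct sum
`ℓ²(ι; (ℂ^{d i}))`, whose blocks are Hermitian matrices with uniformly bounded
operator norms, equals the closure of the union of the spectra of the blocks. -/
theorem blockDiagonal_spectrum_eq_closure_iUnion
    {ι : Type*} [Countable ι] (d : ι → ℕ)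
    (M : ∀ i, Matrix (Fin (d i)) (Fin (d i)) ℂ)
    (hherm : ∀ i, (M i).IsHermitian)
    (C : ℝ) (hC : 0 ≤ C)
    (hbound : ∀ i, ‖Matrix.toEuclideanCLM (𝕜 := ℂ) (M i)‖ ≤ C)
    (T : lp (fun i => EuclideanSpace ℂ (Fin (d i))) 2 →L[ℂ]
         lp (fun i => EuclideanSpace ℂ (Fin (d i))) 2)
    (hT : ∀ (x : lp (fun i => EuclideanSpace ℂ (Fin (d i))) 2) (i : ι),
      (T x : ∀ i, EuclideanSpace ℂ (Fin (d i))) i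
        = Matrix.toEuclideanCLM (𝕜 := ℂ) (M i) (x i)) :
    spectrum ℂ T = closure (⋃ i, spectrum ℂ (M i)) := by
  classical
  set E : ι → Type _ := fun i => EuclideanSpace ℂ (Fin (d i)) with hE
  set A : ∀ i, E i →L[ℂ] E i := fun i => Matrix.toEuclideanCLM (𝕜 := ℂ) (M i) with hA
  have hspec : ∀ i, spectrum ℂ (A i) = spectrum ℂ (M i) := fun i =>
    AlgEquiv.spectrum_eq (Matrix.toEuclideanCLM (𝕜 := ℂ) (n := Fin (d i))) (M i)
  -- the union is contained in the spectrum of T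
  have hsub : (⋃ i, spectrum ℂ (M i)) ⊆ spectrum ℂ T := by
    rintro μ hμ
    simp only [Set.mem_iUnion] at hμ
    obtain ⟨i, hμi⟩ := hμ
    have hμ' : μ ∈ spectrum ℂ (Matrix.toEuclideanLin (M i)) := by
      rwa [Matrix.spectrum_toEuclideanLin]
    have hev : Module.End.HasEigenvalue (Matrix.toEuclideanLin (M i)) μ :=
      Module.End.HasEigenvalue.of_mem_spectrum hμ'
    obtain ⟨v, hv⟩ := hev.exists_hasEigenvector
    have hAv : A i v = μ • v := by
      have : A i v = Matrix.toEuclideanLin (M i) v := by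
        rw [← Matrix.coe_toEuclideanCLM_eq_toEuclideanLin]; rfl
      rw [this, hv.apply_eq_smul]
    set x : lp E 2 := lp.single 2 i v with hx
    have hxi : (x : ∀ j, E j) i = v := by rw [hx]; exact lp.single_apply_self (E := E) 2 i v
    have hxne : x ≠ 0 := by
      intro h
      apply hv.2
      rw [← hxi, h]
      rfl
    have hker : (algebraMap ℂ _ μ - T) x = 0 := by
      apply lp.ext
      funext j
      have : ((algebraMap ℂ (lp E 2 →L[ℂ] lp E 2) μ - T) x : ∀ j, E j) j
          = μ • (x : ∀ j, E j) j - (T x : ∀ j, E j) j := by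
        simp [Algebra.algebraMap_eq_smul_one, lp.coeFn_sub, lp.coeFn_smul]
        rfl
      rw [this, hT x j]
      rcases eq_or_ne j i with rfl | hj
      · rw [hxi, hAv, sub_self]
        rfl
      · have : (x : ∀ j, E j) j = 0 := by
          rw [hx]; exact lp.single_apply_ne (E := E) 2 i v hj
        rw [this, map_zero, smul_zero, sub_zero]
        rfl
    rw [spectrum.mem_iff]
    intro hUnit
    obtain ⟨U, hU⟩ := hUnit
    apply hxne
    have : ((↑U⁻¹ : lp E 2 →L[ℂ] lp E 2) * ↑U) x = x := by rw [U.inv_mul]; rfl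
    rw [← this]
    show (↑U⁻¹ : lp E 2 →L[ℂ] lp E 2) ((↑U : lp E 2 →L[ℂ] lp E 2) x) = 0
    rw [show (↑U : lp E 2 →L[ℂ] lp E 2) x = 0 from by rw [hU]; exact hker, map_zero]
  refine Set.eq_of_subset_of_subset (fun z hz => ?_)
    (closure_minimal hsub (spectrum.isClosed T))
  by_contra hzc
  rcases (⋃ i, spectrum ℂ (M i)).eq_empty_or_nonempty with hUe | hUne
  · -- all spectra empty : all blocks are trivial, H is subsingleton
    have h0 : ∀ i, d i = 0 := by
      intro i
      by_contra hdi
      haveI : Nonempty (Fin (d i)) := ⟨⟨0, Nat.pos_of_ne_zero hdi⟩⟩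
      haveI hnt : Nontrivial (E i) :=
        inferInstanceAs (Nontrivial (EuclideanSpace ℂ (Fin (d i))))
      haveI hnta : Nontrivial (E i →L[ℂ] E i) := by
        obtain ⟨a, b, hab⟩ := hnt
        refine ⟨0, 1, fun h => hab ?_⟩
        have ha := congrArg (fun f => f (a - b)) h.symm
        simpa [sub_eq_zero] using ha
      have := spectrum.nonempty (A i)
      rw [hspec i] at this
      rw [Set.eq_empty_iff_forall_notMem] at hUe
      obtain ⟨μ, hμ⟩ := this
      exact hUe μ (Set.mem_iUnion.2 ⟨i, hμ⟩)
    have hsub2 : ∀ i, Subsingleton (E i) := by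
      intro i
      haveI : IsEmpty (Fin (d i)) := by rw [h0 i]; infer_instance
      exact inferInstanceAs (Subsingleton (EuclideanSpace ℂ (Fin (d i))))
    haveI : Subsingleton (∀ i, E i) := ⟨fun f g => funext fun i => (hsub2 i).elim (f i) (g i)⟩
    haveI hsublp : Subsingleton (lp E 2) := ⟨fun f g => lp.ext (Subsingleton.elim _ _)⟩
    haveI : Subsingleton (lp E 2 →L[ℂ] lp E 2) :=
      ⟨fun f g => ContinuousLinearMap.ext fun x => Subsingleton.elim _ _⟩
    exact spectrum.mem_iff.1 hz (isUnit_of_subsingleton _)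
  · set s : Set ℂ := ⋃ i, spectrum ℂ (M i) with hs
    set ε : ℝ := Metric.infDist z s with hεdef
    have hεpos : 0 < ε := by
      have h1 : 0 < Metric.infDist z (closure s) :=
        (isClosed_closure.notMem_iff_infDist_pos hUne.closure).1 hzc
      rwa [Metric.infDist_closure] at h1
    have hdist : ∀ i, ∀ μ ∈ spectrum ℂ (M i), ε ≤ ‖z - μ‖ := by
      intro i μ hμ
      have : μ ∈ s := Set.mem_iUnion.2 ⟨i, hμ⟩
      have h2 := Metric.infDist_le_dist_of_mem (x := z) this
      rwa [dist_eq_norm] at h2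
    have hzi : ∀ i, IsUnit (algebraMap ℂ (E i →L[ℂ] E i) z - A i) := by
      intro i
      rw [← spectrum.notMem_iff]
      intro hmem
      rw [hspec i] at hmem
      exact hzc (subset_closure (Set.mem_iUnion.2 ⟨i, hmem⟩))
    set u : ∀ i, (E i →L[ℂ] E i)ˣ := fun i => (hzi i).unit with hudef
    set B : ∀ i, E i →L[ℂ] E i := fun i => ↑(u i)⁻¹ with hBdef
    have huval : ∀ i (w : E i), (↑(u i) : E i →L[ℂ] E i) w = z • w - A i w := by
      intro i w
      rw [IsUnit.unit_spec]
      simp [Algebra.algebraMap_eq_smul_one]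
    have hest : ∀ i (w : E i), ε * ‖w‖ ≤ ‖(↑(u i) : E i →L[ℂ] E i) w‖ := by
      intro i w
      rw [huval]
      exact herm_est (M i) (hherm i) z ε hεpos.le (hdist i) w
    have hBnorm : ∀ i, ‖B i‖ ≤ ε⁻¹ := by
      intro i
      refine ContinuousLinearMap.opNorm_le_bound _ (by positivity) fun v => ?_
      have h1 : ε * ‖B i v‖ ≤ ‖v‖ := by
        have h2 := hest i (B i v)
        have h3 : (↑(u i) : E i →L[ℂ] E i) (B i v) = v := by
          have : ((↑(u i) * ↑(u i)⁻¹ : E i →L[ℂ] E i)) v = v := by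
            rw [(u i).mul_inv]; rfl
          exact this
        rwa [h3] at h2
      rw [inv_mul_eq_div, le_div_iff₀ hεpos, mul_comm]
      exact h1
    obtain ⟨S, hS⟩ := exists_blockCLM B ε⁻¹ (by positivity) hBnorm
    have hTS : (algebraMap ℂ (lp E 2 →L[ℂ] lp E 2) z - T) * S = 1 := by
      apply ContinuousLinearMap.ext
      intro x
      apply lp.ext
      funext i
      have h1 : (((algebraMap ℂ (lp E 2 →L[ℂ] lp E 2) z - T) * S) x : ∀ j, E j) i
          = z • (S x : ∀ j, E j) i - (T (S x) : ∀ j, E j) i := by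
        simp [Algebra.algebraMap_eq_smul_one, lp.coeFn_sub, lp.coeFn_smul]
        rfl
      rw [ContinuousLinearMap.one_apply, h1, hT (S x) i, hS x i, ← huval]
      have : ((↑(u i) * ↑(u i)⁻¹ : E i →L[ℂ] E i)) (x i) = x i := by
        rw [(u i).mul_inv]; rfl
      exact this
    have hST : S * (algebraMap ℂ (lp E 2 →L[ℂ] lp E 2) z - T) = 1 := by
      apply ContinuousLinearMap.ext
      intro x
      apply lp.ext
      funext i
      have h1 : ((S * (algebraMap ℂ (lp E 2 →L[ℂ] lp E 2) z - T)) x : ∀ j, E j) i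
          = B i (((algebraMap ℂ (lp E 2 →L[ℂ] lp E 2) z - T) x : ∀ j, E j) i) := by
        rw [show ((S * (algebraMap ℂ (lp E 2 →L[ℂ] lp E 2) z - T)) x : ∀ j, E j) i
          = (S ((algebraMap ℂ (lp E 2 →L[ℂ] lp E 2) z - T) x) : ∀ j, E j) i from rfl,
          hS _ i]
      have h2 : (((algebraMap ℂ (lp E 2 →L[ℂ] lp E 2) z - T) x) : ∀ j, E j) i
          = z • (x : ∀ j, E j) i - (T x : ∀ j, E j) i := by
        simp [Algebra.algebraMap_eq_smul_one, lp.coeFn_sub, lp.coeFn_smul]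
        rfl
      rw [ContinuousLinearMap.one_apply, h1, h2, hT x i, ← huval]
      have : ((↑(u i)⁻¹ * ↑(u i) : E i →L[ℂ] E i)) (x i) = x i := by
        rw [(u i).inv_mul]; rfl
      exact this
    have : IsUnit (algebraMap ℂ (lp E 2 →L[ℂ] lp E 2) z - T) :=
      ⟨⟨algebraMap ℂ (lp E 2 →L[ℂ] lp E 2) z - T, S, hTS, hST⟩, rfl⟩
    exact spectrum.mem_iff.1 hz this
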